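/- arXiv:1107.4812 — 2 statements merged into one kernel-verified Lean document; each statement's English description precedes it below -/
import Mathlib

section
/- Let m ≥ 2 and let σ be a permutation of {1,…,m} that is a single m-cycle. Then σ contains some permutation τ of {1,…,m−1} with ℓ(τ) ≥ m−2. -/
/-!
If `σ` is a full cycle of `Fin N` and `0 < c < N`, some position `i < c` has `c ≤ σ i`, since
otherwise `{i | i < c}` would be `σ`-invariant. Position `i` starts at least `σ i - i` inversions,
so `ℓ(σ) ≥ ∑ i, (σ i - i) ≥ N - 1`, the number of cuts `c`. Deleting position `d` destroys the
inversions involving `d`, which average `2 ℓ(σ) / N` over `d`; hence some deletion keeps at least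
`(N - 2) ℓ(σ) / N ≥ (N - 2) (N - 1) / N > N - 3` inversions.
-/

/-- The (Coxeter) length of a permutation: its number of inversions,
i.e. pairs `i < j` with `σ i > σ j`. -/
def invCount {m : ℕ} (σ : Equiv.Perm (Fin m)) : ℕ :=
  (Finset.univ.filter (fun p : Fin m × Fin m => p.1 < p.2 ∧ σ p.2 < σ p.1)).card

/-- `σ` pattern-contains `π`: there are indices `i_1 < ⋯ < i_k` such that
`σ (i_a) < σ (i_b)` iff `π a < π b`. -/
def PatternContains {n k : ℕ} (σ : Equiv.Perm (Fin n)) (π : Equiv.Perm (Fin k)) : Prop :=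
  ∃ f : Fin k ↪o Fin n, ∀ a b : Fin k, σ (f a) < σ (f b) ↔ π a < π b

open Finset

namespace Equiv.Perm

theorem IsCycle.mem_of_mapsTo {α : Type*} [Fintype α] [DecidableEq α] {σ : Perm α}
    (hσ : σ.IsCycle) (hsupp : σ.support = univ) {s : Set α} (hs : Set.MapsTo σ s s) {x : α}
    (hx : x ∈ s) (y : α) : y ∈ s := by
  have hmoved : ∀ z, σ z ≠ z := fun z => mem_support.mp (hsupp ▸ mem_univ z)
  obtain ⟨i, -, -, rfl⟩ := (hσ.sameCycle (hmoved x) (hmoved y)).exists_pow_eq''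
  rw [coe_pow]
  exact hs.iterate i hx

variable {N n : ℕ}

theorem IsCycle.exists_lt_le_apply {σ : Perm (Fin N)} (hσ : σ.IsCycle) (hsupp : σ.support = univ)
    {c : ℕ} (hc0 : 0 < c) (hcN : c < N) : ∃ i : Fin N, (i : ℕ) < c ∧ c ≤ σ i := by
  by_contra! h
  exact lt_irrefl c <| hσ.mem_of_mapsTo hsupp (s := {i | (i : ℕ) < c}) (fun i hi => h i hi)
    (x := ⟨0, by omega⟩) hc0 ⟨c, hcN⟩

def inversions (σ : Perm (Fin N)) : Finset (Fin N × Fin N) :=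
  {p | p.1 < p.2 ∧ σ p.2 < σ p.1}

theorem card_inversions (σ : Perm (Fin N)) : #σ.inversions = invCount σ := rfl

theorem invCount_eq_sum_card (σ : Perm (Fin N)) :
    invCount σ = ∑ i, #{j | i < j ∧ σ j < σ i} := by
  simp only [invCount, card_filter, ← univ_product_univ, sum_product]

theorem apply_sub_le_card (σ : Perm (Fin N)) (i : Fin N) :
    (σ i : ℕ) - i ≤ #{j | i < j ∧ σ j < σ i} := by
  have hsub : (Iio (σ i)).map σ.symm.toEmbedding ⊆
      Iio i ∪ ({j | i < j ∧ σ j < σ i} : Finset _) := by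
    intro j hj
    obtain ⟨k, hk, rfl⟩ := mem_map.1 hj
    have hne : σ.symm k ≠ i := by rintro rfl; simp at hk
    simp only [mem_union, mem_Iio, mem_filter, mem_univ, true_and, coe_toEmbedding,
      apply_symm_apply]
    rw [mem_Iio] at hk
    rcases lt_or_gt_of_ne hne with h | h
    · exact .inl h
    · exact .inr ⟨h, hk⟩
  have := (card_le_card hsub).trans (card_union_le _ _)
  rw [card_map, Fin.card_Iio, Fin.card_Iio] at this
  omega

theorem IsCycle.sub_one_le_sum_apply_sub {σ : Perm (Fin N)} (hσ : σ.IsCycle)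
    (hsupp : σ.support = univ) : N - 1 ≤ ∑ i : Fin N, ((σ i : ℕ) - i) := by
  calc N - 1 = #(Ioo 0 N) := by simp
    _ ≤ #(univ.biUnion fun i : Fin N => Ioc (i : ℕ) (σ i)) := card_le_card fun c hc => by
        obtain ⟨i, hi, hci⟩ := hσ.exists_lt_le_apply hsupp (mem_Ioo.1 hc).1 (mem_Ioo.1 hc).2
        exact mem_biUnion.2 ⟨i, mem_univ _, mem_Ioc.2 ⟨hi, hci⟩⟩
    _ ≤ ∑ i : Fin N, #(Ioc (i : ℕ) (σ i)) := card_biUnion_le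
    _ = ∑ i : Fin N, ((σ i : ℕ) - i) := by simp

theorem IsCycle.sub_one_le_invCount {σ : Perm (Fin N)} (hσ : σ.IsCycle)
    (hsupp : σ.support = univ) : N - 1 ≤ invCount σ :=
  (hσ.sub_one_le_sum_apply_sub hsupp).trans <|
    (sum_le_sum fun i _ => σ.apply_sub_le_card i).trans_eq σ.invCount_eq_sum_card.symm

def deleteAt (σ : Perm (Fin (n + 1))) (d : Fin (n + 1)) : Perm (Fin n) :=
  (finSuccAboveEquiv d).trans <|
    (σ.subtypeEquiv (q := (· ≠ σ d)) fun _ => σ.injective.ne_iff.symm).trans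
      (finSuccAboveEquiv (σ d)).symm

theorem succAbove_deleteAt (σ : Perm (Fin (n + 1))) (d : Fin (n + 1)) (a : Fin n) :
    (σ d).succAbove (σ.deleteAt d a) = σ (d.succAbove a) :=
  congrArg Subtype.val ((finSuccAboveEquiv (σ d)).apply_symm_apply _)

theorem deleteAt_lt_deleteAt_iff (σ : Perm (Fin (n + 1))) (d : Fin (n + 1)) {a b : Fin n} :
    σ.deleteAt d a < σ.deleteAt d b ↔ σ (d.succAbove a) < σ (d.succAbove b) := by
  rw [← succAbove_deleteAt, ← succAbove_deleteAt, Fin.succAbove_lt_succAbove_iff]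

theorem patternContains_deleteAt (σ : Perm (Fin (n + 1))) (d : Fin (n + 1)) :
    PatternContains σ (σ.deleteAt d) :=
  ⟨d.succAboveOrderEmb, fun _ _ => (σ.deleteAt_lt_deleteAt_iff d).symm⟩

def invCountAt (σ : Perm (Fin N)) (d : Fin N) : ℕ :=
  #{p ∈ σ.inversions | p.1 = d ∨ p.2 = d}

theorem map_inversions_deleteAt (σ : Perm (Fin (n + 1))) (d : Fin (n + 1)) :
    (σ.deleteAt d).inversions.map (d.succAboveEmb.prodMap d.succAboveEmb) =
      {p ∈ σ.inversions | ¬(p.1 = d ∨ p.2 = d)} := by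
  ext ⟨x, y⟩
  simp only [inversions, mem_map, mem_filter, mem_univ, true_and, Prod.exists,
    Function.Embedding.coe_prodMap, Prod.map, Fin.coe_succAboveEmb, Prod.mk.injEq, not_or]
  constructor
  · rintro ⟨a, b, ⟨hab, hσ⟩, rfl, rfl⟩
    exact ⟨⟨Fin.succAbove_lt_succAbove_iff.2 hab, (σ.deleteAt_lt_deleteAt_iff d).1 hσ⟩,
      Fin.succAbove_ne d a, Fin.succAbove_ne d b⟩
  · rintro ⟨⟨hxy, hσ⟩, hx, hy⟩
    obtain ⟨a, rfl⟩ := Fin.exists_succAbove_eq hx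
    obtain ⟨b, rfl⟩ := Fin.exists_succAbove_eq hy
    exact ⟨a, b, ⟨Fin.succAbove_lt_succAbove_iff.1 hxy, (σ.deleteAt_lt_deleteAt_iff d).2 hσ⟩,
      rfl, rfl⟩

theorem invCount_eq_invCountAt_add (σ : Perm (Fin (n + 1))) (d : Fin (n + 1)) :
    invCount σ = σ.invCountAt d + invCount (σ.deleteAt d) := by
  rw [← card_inversions, ← card_inversions, ← card_map (d.succAboveEmb.prodMap d.succAboveEmb),
    map_inversions_deleteAt, invCountAt, card_filter_add_card_filter_not]

theorem sum_invCountAt (σ : Perm (Fin N)) : ∑ d, σ.invCountAt d = 2 * invCount σ := by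
  have hpair : ∀ p ∈ σ.inversions, #{d | p.1 = d ∨ p.2 = d} = 2 := by
    rintro ⟨a, b⟩ hab
    have hne : a ≠ b := ((mem_filter.1 hab).2.1).ne
    rw [show ({d | a = d ∨ b = d} : Finset (Fin N)) = {a, b} by ext; simp [eq_comm],
      card_pair hne]
  calc ∑ d, σ.invCountAt d = ∑ p ∈ σ.inversions, #{d | p.1 = d ∨ p.2 = d} :=
        sum_card_bipartiteAbove_eq_sum_card_bipartiteBelow _
    _ = 2 * invCount σ := by rw [sum_congr rfl hpair, sum_const, smul_eq_mul, mul_comm]; rfl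

theorem exists_mul_invCountAt_le [NeZero N] (σ : Perm (Fin N)) :
    ∃ d, N * σ.invCountAt d ≤ 2 * invCount σ := by
  obtain ⟨d, -, hd⟩ := exists_le_of_sum_le univ_nonempty
    (f := fun d => N * σ.invCountAt d) (g := fun _ => 2 * invCount σ)
    (by simp [← mul_sum, sum_invCountAt])
  exact ⟨d, hd⟩

theorem exists_mul_invCount_le_mul_invCount_deleteAt (σ : Perm (Fin (n + 1))) :
    ∃ d, (n - 1) * invCount σ ≤ (n + 1) * invCount (σ.deleteAt d) := by
  obtain ⟨d, hd⟩ := σ.exists_mul_invCountAt_le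
  refine ⟨d, ?_⟩
  have hsplit := σ.invCount_eq_invCountAt_add d
  rcases n with _ | n
  · simp
  · simp only [Nat.add_sub_cancel]
    nlinarith

end Equiv.Perm

theorem m_cycle_contains_long_pattern_general {m : ℕ} (σ : Equiv.Perm (Fin m))
    (hcyc : σ.IsCycle) (hsupp : σ.support = Finset.univ) :
    ∃ τ : Equiv.Perm (Fin (m - 1)), PatternContains σ τ ∧ m - 2 ≤ invCount τ := by
  obtain ⟨x, -⟩ := hcyc.nonempty_support
  obtain ⟨n, rfl⟩ := Nat.exists_eq_add_one.2 x.pos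
  obtain ⟨d, hd⟩ := σ.exists_mul_invCount_le_mul_invCount_deleteAt
  have hlong : n ≤ invCount σ := hcyc.sub_one_le_invCount hsupp
  refine ⟨σ.deleteAt d, σ.patternContains_deleteAt d, ?_⟩
  show n - 1 ≤ invCount (σ.deleteAt d)
  rcases n with _ | n
  · simp
  · simp only [Nat.add_sub_cancel] at hd ⊢
    nlinarith

/-- Lemma 3.4: every `m`-cycle in `S_m` contains some `τ ∈ S_{m-1}` with
`ℓ(τ) ≥ m - 2`. -/
theorem m_cycle_contains_long_pattern {m : ℕ} (hm : 2 ≤ m) (σ : Equiv.Perm (Fin m))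
    (hcyc : σ.IsCycle) (hsupp : σ.support = Finset.univ) :
    ∃ τ : Equiv.Perm (Fin (m - 1)), PatternContains σ τ ∧ m - 2 ≤ invCount τ :=
  m_cycle_contains_long_pattern_general σ hcyc hsupp
end

section
/- Suppose a permutation τ of {1,…,n} contains a permutation π of {1,…,k}. Then there exists an injective map f from {σ ∈ S_k : σ ≤ π} into {ρ ∈ S_n : ρ ≤ τ} (where ≤ denotes Bruhat order) such that f(π) = τ and such that whenever there is a Bruhat-graph edge σ → σ′ in the Bruhat graph of π, there is a Bruhat-graph edge f(σ) → f(σ′) in the Bruhat graph of τ. In other words, the Bruhat graph of π is isomorphic to a subgraph of the Bruhat graph of τ containing the sink vertex τ. -/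
/-- An edge of the Bruhat graph: `σ → τ` when `ℓ(σ) < ℓ(τ)` and `τσ⁻¹` is a
transposition. -/
def BruhatEdge {n : ℕ} (σ τ : Equiv.Perm (Fin n)) : Prop :=
  invCount σ < invCount τ ∧ (τ * σ⁻¹).IsSwap

/-- Bruhat order: the reflexive-transitive closure of `BruhatEdge`. -/
def BruhatLe {n : ℕ} : Equiv.Perm (Fin n) → Equiv.Perm (Fin n) → Prop :=
  Relation.ReflTransGen BruhatEdge

open Equiv

def inversions {m : ℕ} (ρ : Perm (Fin m)) : Finset (Fin m × Fin m) :=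
  Finset.univ.filter (fun x => x.1 < x.2 ∧ ρ x.2 < ρ x.1)

section Inversions

variable {m : ℕ} {ρ : Perm (Fin m)} {p q : Fin m}

theorem invCount_eq_card_inversions (ρ : Perm (Fin m)) : invCount ρ = (inversions ρ).card :=
  rfl

theorem mem_inversions {x : Fin m × Fin m} : x ∈ inversions ρ ↔ x.1 < x.2 ∧ ρ x.2 < ρ x.1 := by
  simp [inversions]

theorem mem_inversions_mul_swap_of_not_lt (hpq : p < q) (hρ : ρ p < ρ q) {x : Fin m × Fin m}
    (hx : x ∈ inversions ρ) (hs : ¬ swap p q x.1 < swap p q x.2) :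
    x ∈ inversions (ρ * swap p q) := by
  obtain ⟨hlt, hinv⟩ := mem_inversions.mp hx
  refine mem_inversions.mpr ⟨hlt, ?_⟩
  simp only [Perm.mul_apply, swap_apply_def] at hs ⊢
  split_ifs at hs ⊢ <;> subst_vars <;> order

/-- Inversions of `ρ` are sent to inversions of `ρ * swap p q` by conjugating with the swap when
that keeps the pair ordered and by the identity otherwise; the image misses `(p, q)`. -/
theorem invCount_lt_invCount_mul_swap (ρ : Perm (Fin m)) (hpq : p < q) (hρ : ρ p < ρ q) :
    invCount ρ < invCount (ρ * swap p q) := by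
  set s := swap p q
  let g : Fin m × Fin m → Fin m × Fin m := fun x => if s x.1 < s x.2 then (s x.1, s x.2) else x
  have hss : ∀ x, s (s x) = x := swap_apply_self p q
  have maps : ∀ x ∈ inversions ρ, g x ∈ inversions (ρ * s) := by
    intro x hx
    by_cases hs : s x.1 < s x.2
    · have hinv := (mem_inversions.mp hx).2
      simpa [g, hs, mem_inversions, hss] using hinv
    · simpa [g, hs] using mem_inversions_mul_swap_of_not_lt hpq hρ hx hs
  have moved_ne_fixed : ∀ a ∈ inversions ρ, ∀ b : Fin m × Fin m, ¬ s b.1 < s b.2 →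
      (s a.1, s a.2) ≠ b := by
    rintro a ha b hb rfl
    exact hb (by simpa [hss] using (mem_inversions.mp ha).1)
  have inj : Set.InjOn g (inversions ρ) := by
    intro a ha b hb hab
    simp only [g] at hab
    split_ifs at hab with ha' hb' hb'
    · simp only [Prod.mk.injEq, s.injective.eq_iff] at hab
      exact Prod.ext hab.1 hab.2
    · exact absurd hab (moved_ne_fixed a ha b hb')
    · exact absurd hab.symm (moved_ne_fixed b hb a ha')
    · exact hab
  have new : (p, q) ∉ (inversions ρ).image g := by
    rw [Finset.mem_image]
    rintro ⟨x, hx, hgx⟩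
    obtain ⟨hlt, hinv⟩ := mem_inversions.mp hx
    by_cases hs : s x.1 < s x.2
    · simp only [g, hs, if_true, Prod.mk.injEq] at hgx
      have h1 : x.1 = q := by rw [← hss x.1, hgx.1, swap_apply_left]
      have h2 : x.2 = p := by rw [← hss x.2, hgx.2, swap_apply_right]
      exact absurd (hlt.trans_eq h2) (by rw [h1]; exact hpq.not_gt)
    · simp only [g, hs, if_false] at hgx
      subst hgx
      exact hρ.not_gt hinv
  have hpq_mem : (p, q) ∈ inversions (ρ * s) :=
    mem_inversions.mpr ⟨hpq, by simpa [s] using hρ⟩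
  calc invCount ρ = (inversions ρ).card := invCount_eq_card_inversions ρ
    _ = ((inversions ρ).image g).card := (Finset.card_image_of_injOn inj).symm
    _ < (inversions (ρ * s)).card := Finset.card_lt_card <|
        (Finset.ssubset_iff_of_subset (Finset.image_subset_iff.mpr maps)).mpr ⟨(p, q), hpq_mem, new⟩
    _ = invCount (ρ * s) := (invCount_eq_card_inversions _).symm

end Inversions

section BruhatEdge

variable {m : ℕ} {σ σ' : Perm (Fin m)}

theorem bruhatEdge_mul_swap {p q : Fin m} (hpq : p < q) (hσ : σ p < σ q) :
    BruhatEdge σ (σ * swap p q) :=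
  ⟨invCount_lt_invCount_mul_swap σ hpq hσ, σ p, σ q, hσ.ne, (swap_apply_apply σ p q).symm⟩

theorem BruhatEdge.exists_eq_mul_swap (h : BruhatEdge σ σ') :
    ∃ p q, p < q ∧ σ p < σ q ∧ σ' = σ * swap p q := by
  obtain ⟨hlen, x, y, hxy, hswap⟩ := h
  have hσ' : σ' = σ * swap (σ⁻¹ x) (σ⁻¹ y) := by
    rw [← inv_mul_cancel_right σ' σ, hswap, swap_apply_apply, inv_inv]
    group
  have increasing : ∀ {p q}, σ' = σ * swap p q → p < q → σ p < σ q := by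
    intro p q hd hpq
    -- otherwise `σ = σ' * swap p q` would be longer than `σ'`
    by_contra! hge
    have hσ'pq : σ' p < σ' q := by
      simpa [hd] using lt_of_le_of_ne hge (σ.injective.ne hpq.ne')
    have := invCount_lt_invCount_mul_swap σ' hpq hσ'pq
    rw [hd, mul_swap_mul_self] at this
    rw [hd] at hlen
    omega
  rcases lt_or_gt_of_ne (σ⁻¹.injective.ne hxy) with hlt | hlt
  · exact ⟨_, _, hlt, increasing hσ' hlt, hσ'⟩
  · rw [swap_comm] at hσ'
    exact ⟨_, _, hlt, increasing hσ' hlt, hσ'⟩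

end BruhatEdge

theorem Equiv.Perm.viaEmbedding_swap {α β : Type*} [DecidableEq α] [DecidableEq β]
    (ι : α ↪ β) (a b : α) : (swap a b).viaEmbedding ι = swap (ι a) (ι b) := by
  ext x
  by_cases hx : x ∈ Set.range ι
  · obtain ⟨c, rfl⟩ := hx
    rw [Perm.viaEmbedding_apply]
    simp only [swap_apply_def, ι.injective.eq_iff]
    split_ifs <;> rfl
  · rw [Perm.viaEmbedding_apply_of_notMem _ _ x hx,
      swap_apply_of_ne_of_ne (fun h => hx ⟨a, h.symm⟩) (fun h => hx ⟨b, h.symm⟩)]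

noncomputable def patternLift {n k : ℕ} (τ : Perm (Fin n)) (π : Perm (Fin k))
    (e : Fin k ↪o Fin n) (σ : Perm (Fin k)) : Perm (Fin n) :=
  τ * (π⁻¹ * σ).viaEmbedding e.toEmbedding

section PatternLift

variable {n k : ℕ} (τ : Perm (Fin n)) (π : Perm (Fin k)) (e : Fin k ↪o Fin n)

theorem patternLift_self : patternLift τ π e π = τ := by
  simp [patternLift, ← Perm.viaEmbeddingHom_apply]

theorem patternLift_injective : Function.Injective (patternLift τ π e) := by
  intro σ σ' h
  simp only [patternLift, ← Perm.viaEmbeddingHom_apply, mul_right_inj] at h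
  exact mul_left_cancel (Perm.viaEmbeddingHom_injective _ h)

theorem patternLift_apply (σ : Perm (Fin k)) (a : Fin k) :
    patternLift τ π e σ (e a) = τ (e (π⁻¹ (σ a))) :=
  congrArg τ (Perm.viaEmbedding_apply _ e.toEmbedding a)

theorem patternLift_mul_swap (σ : Perm (Fin k)) (p q : Fin k) :
    patternLift τ π e (σ * swap p q) = patternLift τ π e σ * swap (e p) (e q) := by
  simp only [patternLift, ← Perm.viaEmbeddingHom_apply, ← mul_assoc, map_mul]
  rw [Perm.viaEmbeddingHom_apply (swap p q), Perm.viaEmbedding_swap]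
  rfl

variable {τ π e}

theorem patternLift_lt_iff (he : ∀ a b, τ (e a) < τ (e b) ↔ π a < π b)
    (σ : Perm (Fin k)) (a b : Fin k) :
    patternLift τ π e σ (e a) < patternLift τ π e σ (e b) ↔ σ a < σ b := by
  rw [patternLift_apply, patternLift_apply, he]
  simp

theorem bruhatEdge_patternLift (he : ∀ a b, τ (e a) < τ (e b) ↔ π a < π b)
    {σ σ' : Perm (Fin k)} (h : BruhatEdge σ σ') :
    BruhatEdge (patternLift τ π e σ) (patternLift τ π e σ') := by
  obtain ⟨p, q, hpq, hσ, rfl⟩ := h.exists_eq_mul_swap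
  rw [patternLift_mul_swap]
  exact bruhatEdge_mul_swap (e.strictMono hpq) ((patternLift_lt_iff he σ p q).mpr hσ)

theorem bruhatLe_patternLift (he : ∀ a b, τ (e a) < τ (e b) ↔ π a < π b)
    {σ : Perm (Fin k)} (h : BruhatLe σ π) : BruhatLe (patternLift τ π e σ) τ := by
  have := Relation.ReflTransGen.lift (patternLift τ π e)
    (fun _ _ hedge => bruhatEdge_patternLift he hedge) σ π h
  rwa [Function.onFun, patternLift_self] at this

end PatternLift

/-- Proposition 2.3: if `τ ∈ S_n` contains `π ∈ S_k`, then the Bruhat graph of `π` is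
isomorphic to a subgraph of the Bruhat graph of `τ` containing the sink vertex `τ`:
there is an injection `f` of `{σ : σ ≤ π}` into `{ρ : ρ ≤ τ}` sending `π` to `τ` and
carrying every Bruhat-graph edge of `B(π)` to a Bruhat-graph edge of `B(τ)`. -/
theorem bruhat_graph_embeds_of_contains {n k : ℕ}
    (τ : Equiv.Perm (Fin n)) (π : Equiv.Perm (Fin k)) (h : PatternContains τ π) :
    ∃ f : {σ : Equiv.Perm (Fin k) // BruhatLe σ π} →
          {ρ : Equiv.Perm (Fin n) // BruhatLe ρ τ},
      Function.Injective f ∧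
      f ⟨π, Relation.ReflTransGen.refl⟩ = ⟨τ, Relation.ReflTransGen.refl⟩ ∧
      ∀ σ σ' : {σ : Equiv.Perm (Fin k) // BruhatLe σ π},
        BruhatEdge σ.1 σ'.1 → BruhatEdge (f σ).1 (f σ').1 := by
  obtain ⟨e, he⟩ := h
  refine ⟨fun σ => ⟨patternLift τ π e σ, bruhatLe_patternLift he σ.2⟩, ?_, ?_, ?_⟩
  · intro σ σ' hσσ'
    exact Subtype.ext (patternLift_injective τ π e (congrArg Subtype.val hσσ'))
  · exact Subtype.ext (patternLift_self τ π e)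
  · intro σ σ' hedge
    exact bruhatEdge_patternLift he hedge
end
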